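/- For ξ = (x, y) ∈ se(3) represented as the 4×4 matrix ξ̂ = [[x̃, y],[0,0]], the matrix exponential satisfies exp(ξ̂) = [[exp(x̃), dexp_x · y],[0, 1]], where dexp_x = I + (β/2)x̃ + ((1−α)/‖x‖²)x̃² with α = sinc‖x‖, β = sinc²(‖x‖/2). -/

import Mathlib

open Matrix

/-- The skew-symmetric matrix `x̃` associated with `x ∈ ℝ³`. -/
def skew (x : Fin 3 → ℝ) : Matrix (Fin 3) (Fin 3) ℝ :=
  !![0, -x 2, x 1; x 2, 0, -x 0; -x 1, x 0, 0]

/-- `sinc x = sin x / x` for `x ≠ 0`, and `sinc 0 = 1`. -/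
noncomputable def sinc (x : ℝ) : ℝ := if x = 0 then 1 else Real.sin x / x

/-- The matrix `[[x̃, y],[0,0]]` representing `ξ = (x, y) ∈ se(3)`. -/
def se3Hat (x y : Fin 3 → ℝ) : Matrix (Fin 3 ⊕ Fin 1) (Fin 3 ⊕ Fin 1) ℝ :=
  Matrix.fromBlocks (skew x) (Matrix.of fun i (_ : Fin 1) => y i) 0 0

/-! The skew matrix satisfies `x̃³ = -‖x‖² • x̃`, and therefore both `x̃` and `ξ̂` satisfy
`M⁴ = s • M²` with `s = -‖x‖²`. For any such `M` the exponential series collapses to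
`exp M = 1 + M + c₂(s) • M² + c₃(s) • M³` with `c_j(s) = ∑ₖ sᵏ / (2k + j)!`; at `s = -φ²` the
cosine and sine series give `c₂ = (1 - cos φ) / φ² = β / 2` and
`c₃ = (φ - sin φ) / φ³ = (1 - α) / φ²`.
Since the upper right block of `ξ̂^(k+1)` is `x̃ᵏ y`, the upper right block of `exp ξ̂` is
`(1 + c₂ • x̃ + c₃ • x̃²) y = dexp_x y`. -/

open NormedSpace

/-- The coefficient of `M ^ j` in `exp M` whenever `M ^ 4 = s • M ^ 2` (for `j = 2, 3`). -/
noncomputable def expCoeff (j : ℕ) (s : ℝ) : ℝ := ∑' k : ℕ, s ^ k / (2 * k + j).factorial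

lemma hasSum_expCoeff (j : ℕ) (s : ℝ) :
    HasSum (fun k : ℕ => s ^ k / (2 * k + j).factorial) (expCoeff j s) := by
  refine (Summable.of_norm_bounded (Real.summable_pow_div_factorial |s|) fun k => ?_).hasSum
  rw [norm_div, norm_pow, Real.norm_eq_abs, Real.norm_natCast]
  gcongr
  omega

section PowFour

variable {R S : Type*} [Monoid R] [Monoid S] [MulAction S R] {M : R} {s : S}

lemma pow_add_two_of_pow_four_eq_smul [SMulCommClass S R R] (hM : M ^ 4 = s • M ^ 2) {n : ℕ}
    (hn : 2 ≤ n) : M ^ (n + 2) = s • M ^ n := by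
  obtain ⟨m, rfl⟩ := Nat.exists_eq_add_of_le' hn
  rw [add_assoc, pow_add, hM, mul_smul_comm, ← pow_add]

lemma pow_two_mul_add_of_pow_four_eq_smul [SMulCommClass S R R] (hM : M ^ 4 = s • M ^ 2)
    (k : ℕ) {n : ℕ} (hn : 2 ≤ n) : M ^ (2 * k + n) = s ^ k • M ^ n := by
  induction k with
  | zero => simp
  | succ k ih =>
    rw [show 2 * (k + 1) + n = 2 * k + n + 2 by ring,
      pow_add_two_of_pow_four_eq_smul hM (by omega), ih, smul_smul, pow_succ']

lemma pow_four_of_pow_three_eq_smul [IsScalarTower S R R] (hM : M ^ 3 = s • M) :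
    M ^ 4 = s • M ^ 2 := by
  rw [pow_succ, hM, smul_mul_assoc, ← pow_two]

end PowFour

theorem NormedSpace.exp_eq_of_pow_four_eq_smul {𝔸 : Type*} [NormedRing 𝔸] [NormedAlgebra ℝ 𝔸]
    [CompleteSpace 𝔸] {M : 𝔸} {s : ℝ} (hM : M ^ 4 = s • M ^ 2) :
    exp M = 1 + M + expCoeff 2 s • M ^ 2 + expCoeff 3 s • M ^ 3 := by
  have htail : HasSum (fun n => ((n + 2).factorial : ℝ)⁻¹ • M ^ (n + 2))
      (expCoeff 2 s • M ^ 2 + expCoeff 3 s • M ^ 3) := by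
    refine HasSum.even_add_odd ?_ ?_
    · convert (hasSum_expCoeff 2 s).smul_const (M ^ 2) using 2 with k
      rw [pow_two_mul_add_of_pow_four_eq_smul hM k le_rfl, smul_smul, div_eq_inv_mul]
    · convert (hasSum_expCoeff 3 s).smul_const (M ^ 3) using 2 with k
      rw [add_assoc, pow_two_mul_add_of_pow_four_eq_smul hM k (by norm_num), smul_smul,
        div_eq_inv_mul]
  have := ((hasSum_nat_add_iff' 2).mpr (exp_series_hasSum_exp' (𝕂 := ℝ) M)).unique htail
  simp only [Finset.sum_range_succ, Finset.range_one, Finset.sum_singleton, Nat.factorial_zero,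
    Nat.cast_one, inv_one, pow_zero, one_smul, Nat.factorial_one, pow_one] at this
  rw [add_assoc, ← this, add_sub_cancel]

lemma expCoeff_two_neg_sq {φ : ℝ} (hφ : φ ≠ 0) : expCoeff 2 (-φ ^ 2) = sinc (φ / 2) ^ 2 / 2 := by
  have hcos := ((hasSum_nat_add_iff' 1).mpr (Real.hasSum_cos φ)).mul_right (-(φ ^ 2)⁻¹)
  refine (hasSum_expCoeff 2 _).unique (hcos.congr_fun fun k => ?_) |>.trans ?_
  · rw [neg_pow, ← pow_mul]
    field_simp
    ring_nf
  · rw [sinc, if_neg (by positivity), div_pow, Real.sin_sq_eq_half_sub,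
      show 2 * (φ / 2) = φ by ring, Finset.sum_range_one]
    field_simp
    ring

lemma expCoeff_three_neg_sq {φ : ℝ} (hφ : φ ≠ 0) : expCoeff 3 (-φ ^ 2) = (1 - sinc φ) / φ ^ 2 := by
  have hsin := ((hasSum_nat_add_iff' 1).mpr (Real.hasSum_sin φ)).mul_right (-(φ ^ 3)⁻¹)
  refine (hasSum_expCoeff 3 _).unique (hsin.congr_fun fun k => ?_) |>.trans ?_
  · rw [neg_pow, ← pow_mul]
    field_simp
    ring_nf
  · rw [sinc, if_neg hφ, Finset.sum_range_one]
    field_simp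
    ring

section Blocks

variable {n m R : Type*} [Fintype n] [DecidableEq n] [Fintype m] [DecidableEq m]

lemma Matrix.fromBlocks_zero_zero_pow_succ [Semiring R] (A : Matrix n n R) (B : Matrix n m R)
    (k : ℕ) :
    fromBlocks A B 0 (0 : Matrix m m R) ^ (k + 1) = fromBlocks (A ^ (k + 1)) (A ^ k * B) 0 0 := by
  induction k with
  | zero => simp
  | succ k ih => simp [pow_succ _ (k + 1), ih, fromBlocks_multiply, pow_succ, Matrix.mul_assoc]

lemma Matrix.fromBlocks_zero_zero_pow_four [CommSemiring R] {A : Matrix n n R}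
    (B : Matrix n m R) {s : R} (hA : A ^ 3 = s • A) :
    fromBlocks A B 0 (0 : Matrix m m R) ^ 4 = s • fromBlocks A B 0 (0 : Matrix m m R) ^ 2 := by
  simp [fromBlocks_zero_zero_pow_succ _ _ 3, fromBlocks_zero_zero_pow_succ _ _ 1, hA,
    pow_four_of_pow_three_eq_smul hA, fromBlocks_smul]

theorem Matrix.exp_eq_of_pow_four_eq_smul {A : Matrix n n ℝ} {s : ℝ} (hA : A ^ 4 = s • A ^ 2) :
    exp A = 1 + A + expCoeff 2 s • A ^ 2 + expCoeff 3 s • A ^ 3 := by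
  let : NormedRing (Matrix n n ℝ) := Matrix.linftyOpNormedRing
  let : NormedAlgebra ℝ (Matrix n n ℝ) := Matrix.linftyOpNormedAlgebra
  exact NormedSpace.exp_eq_of_pow_four_eq_smul hA

theorem Matrix.exp_fromBlocks_zero_zero {A : Matrix n n ℝ} (B : Matrix n m ℝ) {s : ℝ}
    (hA : A ^ 3 = s • A) :
    exp (fromBlocks A B 0 (0 : Matrix m m ℝ)) =
      fromBlocks (exp A) ((1 + expCoeff 2 s • A + expCoeff 3 s • A ^ 2) * B) 0 1 := by
  rw [exp_eq_of_pow_four_eq_smul (fromBlocks_zero_zero_pow_four B hA),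
    exp_eq_of_pow_four_eq_smul (pow_four_of_pow_three_eq_smul hA)]
  simp [fromBlocks_zero_zero_pow_succ _ _ 1, fromBlocks_zero_zero_pow_succ _ _ 2,
    ← fromBlocks_one, fromBlocks_smul, fromBlocks_add, Matrix.add_mul]

end Blocks

lemma skew_pow_three (x : Fin 3 → ℝ) :
    skew x ^ 3 = -(x 0 ^ 2 + x 1 ^ 2 + x 2 ^ 2) • skew x := by
  ext i j
  fin_cases i <;> fin_cases j <;>
    simp [skew, pow_succ, Matrix.mul_apply, Fin.sum_univ_three] <;> ring

/-- Closed form of the matrix exponential on `SE(3)`: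
`exp [[x̃,y],[0,0]] = [[exp x̃, dexp_x · y],[0,1]]`, where
`dexp_x = I + (β/2)x̃ + ((1−α)/‖x‖²)x̃²`, `α = sinc ‖x‖`, `β = sinc²(‖x‖/2)`. -/
theorem stmt8 (x y : Fin 3 → ℝ) (φ α β : ℝ)
    (hφ : φ = Real.sqrt (x 0 ^ 2 + x 1 ^ 2 + x 2 ^ 2))
    (hα : α = sinc φ) (hβ : β = sinc (φ / 2) ^ 2)
    (dexpx : Matrix (Fin 3) (Fin 3) ℝ)
    (hdexp : dexpx = 1 + (β / 2) • skew x + ((1 - α) / φ ^ 2) • (skew x) ^ 2) :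
    NormedSpace.exp (se3Hat x y) =
      Matrix.fromBlocks (NormedSpace.exp (skew x))
        (Matrix.of fun i (_ : Fin 1) => (dexpx *ᵥ y) i) 0 1 := by
  have hnorm : φ ^ 2 = x 0 ^ 2 + x 1 ^ 2 + x 2 ^ 2 := by rw [hφ, Real.sq_sqrt (by positivity)]
  have hA : skew x ^ 3 = (-φ ^ 2) • skew x := by rw [skew_pow_three, hnorm]
  have hcoeff : 1 + expCoeff 2 (-φ ^ 2) • skew x + expCoeff 3 (-φ ^ 2) • skew x ^ 2 = dexpx := by
    rcases eq_or_ne φ 0 with h0 | h0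
    -- at `φ = 0` the coefficient `(1 - α) / φ ^ 2` is the junk value `0`, but then `x̃ = 0`
    · have hsq : x 0 ^ 2 + x 1 ^ 2 + x 2 ^ 2 = 0 := by rw [← hnorm, h0, zero_pow two_ne_zero]
      obtain ⟨hx₀, hx₁, hx₂⟩ : x 0 = 0 ∧ x 1 = 0 ∧ x 2 = 0 := by
        refine ⟨?_, ?_, ?_⟩ <;> nlinarith [sq_nonneg (x 0), sq_nonneg (x 1), sq_nonneg (x 2)]
      have hA0 : skew x = 0 := by
        ext i j
        fin_cases i <;> fin_cases j <;> simp [skew, hx₀, hx₁, hx₂]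
      simp [hdexp, hA0]
    · rw [hdexp, hα, hβ, expCoeff_two_neg_sq h0, expCoeff_three_neg_sq h0]
  rw [se3Hat, exp_fromBlocks_zero_zero _ hA, hcoeff]
  rfl
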